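/- arXiv:1609.09476 — 3 statements merged into one kernel-verified Lean document; each statement's English description precedes it below -/
import Mathlib

section
/- The Jacobi triple product identity: as formal power series (or for |q| < 1, z ≠ 0), ∏_{n=1}^∞ (1 + z q^n)(1 + z^{-1} q^{n-1})(1 - q^n) = ∑_{j=-∞}^∞ z^j q^{binom(j+1,2)}. -/
/-!
Cauchy's `q`-binomial theorem `∏_{m<N} (1 + w q^m) = ∑_k [N, k]_q q^{k(k-1)/2} w^k`, taken with
`N = 2n` and `w = z q^{1-n}`, gives the finite identity
`∏_{m<n} (1 + z q^{m+1})(1 + z⁻¹ q^m) = ∑_{|j| ≤ n} [2n, n+j]_q z^j q^{j(j+1)/2}`.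
Multiplied by `(q;q)_n`, the coefficient of `z^j q^{j(j+1)/2}` becomes
`(q;q)_{2n} (q;q)_n / ((q;q)_{n+j} (q;q)_{n-j})`. For `‖q‖ < 1` the partial products `(q;q)_n`
converge to a nonzero limit, so these coefficients are bounded uniformly in `n` and `j` and tend
to `1`; since the theta series converges absolutely, Tannery's theorem lets `n → ∞`. The finite
identity needs `q ≠ 0`; at `q = 0` both sides equal `1 + z⁻¹`.
-/

open Finset Filter Topology

section QBinomial

variable {R : Type*}

-- The `q`-Pochhammer symbol `(q;q)_n`.
def qPoch [CommRing R] (q : R) (n : ℕ) : R := ∏ m ∈ range n, (1 - q ^ (m + 1))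

def qBinom [CommSemiring R] (q : R) : ℕ → ℕ → R
  | _, 0 => 1
  | 0, _ + 1 => 0
  | N + 1, k + 1 => q ^ (k + 1) * qBinom q N (k + 1) + qBinom q N k

section CommSemiring

variable [CommSemiring R] (q : R)

@[simp] lemma qBinom_zero_right (N : ℕ) : qBinom q N 0 = 1 := by cases N <;> rfl

lemma qBinom_succ_succ (N k : ℕ) :
    qBinom q (N + 1) (k + 1) = q ^ (k + 1) * qBinom q N (k + 1) + qBinom q N k := rfl

lemma qBinom_eq_zero_of_lt {N k : ℕ} (h : N < k) : qBinom q N k = 0 := by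
  induction N generalizing k with
  | zero => obtain ⟨k, rfl⟩ := Nat.exists_eq_add_one_of_ne_zero (by omega : k ≠ 0); rfl
  | succ N ih =>
    obtain ⟨k, rfl⟩ := Nat.exists_eq_add_one_of_ne_zero (by omega : k ≠ 0)
    rw [qBinom_succ_succ, ih (by omega), ih (by omega), mul_zero, add_zero]

@[simp] lemma qBinom_self (N : ℕ) : qBinom q N N = 1 := by
  induction N with
  | zero => rfl
  | succ N ih =>
    rw [qBinom_succ_succ, qBinom_eq_zero_of_lt q N.lt_succ_self, ih, mul_zero, zero_add]

lemma pow_choose_two_succ (k : ℕ) : q ^ (k + 1).choose 2 = q ^ k.choose 2 * q ^ k := by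
  rw [Nat.choose_succ_succ', Nat.choose_one_right, add_comm, pow_add]

theorem prod_range_one_add_mul_pow (w : R) (N : ℕ) :
    ∏ m ∈ range N, (1 + w * q ^ m)
      = ∑ k ∈ range (N + 1), qBinom q N k * q ^ k.choose 2 * w ^ k := by
  induction N generalizing w with
  | zero => simp
  | succ N ih =>
    have hshift : ∀ m, w * q ^ (m + 1) = w * q * q ^ m := fun m => by ring
    have hlow : ∑ k ∈ range (N + 1), qBinom q N k * q ^ k.choose 2 * (w * q) ^ k
        = ∑ k ∈ range (N + 1),
            q ^ (k + 1) * qBinom q N (k + 1) * q ^ (k + 1).choose 2 * w ^ (k + 1) + 1 := by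
      rw [sum_range_succ' _ N, sum_range_succ _ N, qBinom_eq_zero_of_lt q N.lt_succ_self]
      simp only [qBinom_zero_right, Nat.choose_zero_succ, pow_zero, mul_one, mul_zero, zero_mul,
        add_zero]
      exact congrArg (· + 1) (sum_congr rfl fun k _ => by rw [pow_choose_two_succ]; ring)
    have hhigh : ∑ k ∈ range (N + 1), qBinom q N k * q ^ k.choose 2 * (w * q) ^ k * w
        = ∑ k ∈ range (N + 1), qBinom q N k * q ^ (k + 1).choose 2 * w ^ (k + 1) :=
      sum_congr rfl fun k _ => by rw [pow_choose_two_succ]; ring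
    rw [prod_range_succ']
    simp only [hshift]
    rw [ih, pow_zero, mul_one, mul_add, mul_one, sum_mul, hhigh, hlow, sum_range_succ' _ (N + 1)]
    simp only [qBinom_succ_succ, add_mul, sum_add_distrib, qBinom_zero_right, Nat.choose_zero_succ,
      pow_zero, mul_one]
    ring

end CommSemiring

section CommRing

variable [CommRing R] (q : R)

lemma qPoch_succ (n : ℕ) : qPoch q (n + 1) = qPoch q n * (1 - q ^ (n + 1)) := prod_range_succ _ _

theorem qBinom_add_mul_qPoch : ∀ a b : ℕ,
    qBinom q (a + b) a * (qPoch q a * qPoch q b) = qPoch q (a + b)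
  | 0, b => by simp [qPoch]
  | a + 1, 0 => by simp [qPoch]
  | a + 1, b + 1 => by
    have h₁ := qBinom_add_mul_qPoch (a + 1) b
    have h₂ := qBinom_add_mul_qPoch a (b + 1)
    rw [show a + 1 + b = a + b + 1 by ring] at h₁
    rw [show a + (b + 1) = a + b + 1 by ring] at h₂
    rw [show a + 1 + (b + 1) = a + b + 1 + 1 by ring, qBinom_succ_succ, qPoch_succ q (a + b + 1)]
    rw [qPoch_succ] at h₁ ⊢
    rw [qPoch_succ] at h₂ ⊢
    linear_combination (1 - q ^ (a + 1)) * h₂ + q ^ (a + 1) * (1 - q ^ (b + 1)) * h₁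
termination_by a b => a + b

-- `[2n, n+j]_q (q;q)_n`: the coefficient of `z ^ j q ^ (j(j+1)/2)` in `(q;q)_n` times the finite
-- product; it vanishes for `|j| > n`, when `j > n` through the `q`-binomial.
def jacobiCoeff (q : R) (n : ℕ) (j : ℤ) : R :=
  if -(n : ℤ) ≤ j then qBinom q (2 * n) (j + n).toNat * qPoch q n else 0

end CommRing

end QBinomial

lemma two_mul_natCast_choose_two (n : ℕ) : 2 * (n.choose 2 : ℤ) = n * (n - 1) := by
  have h := Nat.cast_choose_two ℚ n
  have : ((2 * n.choose 2 : ℤ) : ℚ) = ((n * (n - 1) : ℤ) : ℚ) := by push_cast; rw [h]; ring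
  exact_mod_cast this

lemma sub_mul_sub_add_one_div_two (k n : ℕ) :
    ((k : ℤ) - n) * ((k : ℤ) - n + 1) / 2 = n.choose 2 + k.choose 2 + k - n * k :=
  Int.ediv_eq_of_eq_mul_right two_ne_zero <| by
    linear_combination (-1 : ℤ) * two_mul_natCast_choose_two n - two_mul_natCast_choose_two k

section FiniteJacobi

variable {K : Type*} [Field K] {q z : K}

lemma prod_range_two_mul_one_add_mul_pow (hq : q ≠ 0) (hz : z ≠ 0) (n : ℕ) :
    ∏ m ∈ range (2 * n), (1 + z * q / q ^ n * q ^ m)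
      = z ^ n / q ^ n.choose 2 * ∏ m ∈ range n, ((1 + z * q ^ (m + 1)) * (1 + z⁻¹ * q ^ m)) := by
  have hlow : ∀ i ∈ range n,
      1 + z * q / q ^ n * q ^ (n - 1 - i) = z / q ^ i * (1 + z⁻¹ * q ^ i) := by
    intro i hi
    obtain ⟨j, rfl⟩ : ∃ j, n = j + i + 1 := ⟨n - 1 - i, by have := mem_range.mp hi; omega⟩
    rw [show j + i + 1 - 1 - i = j by omega]
    field_simp
    ring
  have hhigh : ∀ i ∈ range n, 1 + z * q / q ^ n * q ^ (n + i) = 1 + z * q ^ (i + 1) := by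
    intro i _
    field_simp
    ring
  rw [two_mul, prod_range_add, ← prod_range_reflect, prod_congr rfl hlow, prod_congr rfl hhigh,
    prod_mul_distrib, prod_div_distrib, prod_const, card_range, prod_pow_eq_pow_sum, sum_range_id,
    ← Nat.choose_two_right, prod_mul_distrib]
  ring

theorem prod_range_jacobi_eq_sum_qBinom (hq : q ≠ 0) (hz : z ≠ 0) (n : ℕ) :
    ∏ m ∈ range n, ((1 + z * q ^ (m + 1)) * (1 + z⁻¹ * q ^ m))
      = ∑ k ∈ range (2 * n + 1),
          qBinom q (2 * n) k
            * (z ^ ((k : ℤ) - n) * q ^ (((k : ℤ) - n) * ((k : ℤ) - n + 1) / 2)) := by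
  have hterm : ∀ k : ℕ,
      q ^ n.choose 2 / z ^ n * (qBinom q (2 * n) k * q ^ k.choose 2 * (z * q / q ^ n) ^ k)
        = qBinom q (2 * n) k
          * (z ^ ((k : ℤ) - n) * q ^ (((k : ℤ) - n) * ((k : ℤ) - n + 1) / 2)) := by
    intro k
    rw [sub_mul_sub_add_one_div_two, zpow_sub₀ hz, zpow_sub₀ hq, zpow_add₀ hq, zpow_add₀ hq]
    simp only [zpow_natCast, ← Nat.cast_mul, div_pow, mul_pow, ← pow_mul]
    field_simp
  calc _ = q ^ n.choose 2 / z ^ n * ∏ m ∈ range (2 * n), (1 + z * q / q ^ n * q ^ m) := by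
        rw [prod_range_two_mul_one_add_mul_pow hq hz]; field_simp
    _ = _ := by rw [prod_range_one_add_mul_pow, mul_sum]; exact sum_congr rfl fun k _ => hterm k

end FiniteJacobi

lemma summable_pow_mul_pow_choose_two {r : ℝ} (hr₀ : 0 ≤ r) (hr : r < 1) (w : ℝ) :
    Summable fun n : ℕ => w ^ n * r ^ (n + 1).choose 2 := by
  refine summable_of_ratio_norm_eventually_le (r := 1 / 2) (by norm_num) ?_
  have hlim : Tendsto (fun n : ℕ => |w| * r ^ (n + 1)) atTop (𝓝 0) := by
    simpa using ((tendsto_pow_atTop_nhds_zero_of_lt_one hr₀ hr).comp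
      (tendsto_add_atTop_nat 1)).const_mul |w|
  filter_upwards [hlim.eventually_le_const (by norm_num : (0 : ℝ) < 1 / 2)] with n hn
  calc ‖w ^ (n + 1) * r ^ (n + 1 + 1).choose 2‖
      = ‖w ^ n * r ^ (n + 1).choose 2‖ * (|w| * r ^ (n + 1)) := by
        simp only [pow_choose_two_succ, Real.norm_eq_abs, abs_mul, abs_pow, abs_of_nonneg hr₀]
        ring
    _ ≤ ‖w ^ n * r ^ (n + 1).choose 2‖ * (1 / 2) := by gcongr
    _ = 1 / 2 * ‖w ^ n * r ^ (n + 1).choose 2‖ := mul_comm _ _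

lemma tendsto_tsum_mul_of_tendsto_one {α β K : Type*} [NormedRing K] [CompleteSpace K]
    {l : Filter α} {c : α → β → K} {θ : β → K} (hθ : Summable fun j => ‖θ j‖)
    (hc : ∀ j, Tendsto (c · j) l (𝓝 1)) {C : ℝ} (hC : ∀ n j, ‖c n j‖ ≤ C) :
    Tendsto (fun n => ∑' j, c n j * θ j) l (𝓝 (∑' j, θ j)) :=
  tendsto_tsum_of_dominated_convergence (hθ.mul_left C)
    (fun j => by simpa using (hc j).mul_const (θ j))
    (Eventually.of_forall fun n j => (norm_mul_le _ _).trans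
      (mul_le_mul_of_nonneg_right (hC n j) (norm_nonneg _)))

section Analysis

variable {K : Type*} [NormedField K] {q : K}

lemma norm_pow_succ_lt_one (hq : ‖q‖ < 1) (m : ℕ) : ‖q ^ (m + 1)‖ < 1 := by
  rw [norm_pow]; exact pow_lt_one₀ (norm_nonneg q) hq m.succ_ne_zero

lemma qPoch_ne_zero (hq : ‖q‖ < 1) (n : ℕ) : qPoch q n ≠ 0 :=
  prod_ne_zero_iff.mpr fun m _ h => by
    have := norm_pow_succ_lt_one hq m
    rw [← sub_eq_zero.mp h, norm_one] at this
    exact this.false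

lemma jacobiCoeff_eq_of_natAbs_le (hq : ‖q‖ < 1) {n : ℕ} {j : ℤ} (hj : j.natAbs ≤ n) :
    jacobiCoeff q n j
      = qPoch q (2 * n) * qPoch q n
          * ((qPoch q (j + n).toNat)⁻¹ * (qPoch q (n - j).toNat)⁻¹) := by
  have h := qBinom_add_mul_qPoch q (j + n).toNat (n - j).toNat
  rw [show (j + n).toNat + (n - j).toNat = 2 * n by omega] at h
  rw [jacobiCoeff, if_pos (by omega), ← h]
  field_simp [qPoch_ne_zero hq]

lemma tsum_jacobiCoeff_mul (θ : ℤ → K) (n : ℕ) :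
    ∑' j, jacobiCoeff q n j * θ j
      = qPoch q n * ∑ k ∈ range (2 * n + 1), qBinom q (2 * n) k * θ (k - n) := by
  rw [tsum_eq_sum (s := (range (2 * n + 1)).image fun k : ℕ => (k : ℤ) - n),
    sum_image fun a _ b _ h => by simpa using h, mul_sum]
  · refine sum_congr rfl fun k _ => ?_
    rw [jacobiCoeff, if_pos (by omega), show ((k : ℤ) - n + n).toNat = k by omega]
    ring
  · intro j hj
    simp only [Finset.mem_image, mem_range, not_exists, not_and] at hj
    by_cases hneg : -(n : ℤ) ≤ j
    · have := hj (j + n).toNat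
      rw [jacobiCoeff, if_pos hneg, qBinom_eq_zero_of_lt q (by omega), zero_mul, zero_mul]
    · rw [jacobiCoeff, if_neg hneg, zero_mul]

lemma summable_norm_zpow_mul_zpow (hq : ‖q‖ < 1) (z : K) :
    Summable fun j : ℤ => ‖z ^ j * q ^ (j * (j + 1) / 2)‖ := by
  have hpos : ∀ n : ℕ, (n : ℤ) * (n + 1) / 2 = ((n + 1).choose 2 : ℕ) := fun n =>
    Int.ediv_eq_of_eq_mul_right two_ne_zero <| by
      push_cast [two_mul_natCast_choose_two (n + 1)]
      ring
  have hneg : ∀ n : ℕ,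
      -((n : ℤ) + 1) * (-((n : ℤ) + 1) + 1) / 2 = ((n + 1).choose 2 : ℕ) := fun n =>
    Int.ediv_eq_of_eq_mul_right two_ne_zero <| by
      push_cast [two_mul_natCast_choose_two (n + 1)]
      ring
  refine Summable.of_nat_of_neg_add_one ?_ ?_
  · simpa only [hpos, norm_mul, norm_zpow, zpow_natCast, norm_pow] using
      summable_pow_mul_pow_choose_two (norm_nonneg q) hq ‖z‖
  · refine ((summable_pow_mul_pow_choose_two (norm_nonneg q) hq ‖z‖⁻¹).mul_left ‖z‖⁻¹).congr
      fun n => ?_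
    rw [hneg, norm_mul, norm_zpow, norm_zpow, zpow_natCast, zpow_neg, ← Nat.cast_succ,
      zpow_natCast, ← inv_pow, pow_succ', mul_assoc]

theorem jacobi_triple_product_zero (z : K) :
    ∏' m : ℕ, ((1 + z * 0 ^ (m + 1)) * (1 + z⁻¹ * 0 ^ m) * (1 - 0 ^ (m + 1)))
      = ∑' j : ℤ, z ^ j * (0 : K) ^ (j * (j + 1) / 2) := by
  rw [tprod_eq_mulSingle 0 fun m hm => by simp [hm], tsum_eq_sum (s := {0, -1}) fun j hj => ?_,
    sum_pair (by norm_num)]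
  · norm_num
  · simp only [mem_insert, mem_singleton, not_or] at hj
    have h₂ : j * (j + 1) / 2 * 2 = j * (j + 1) :=
      Int.ediv_mul_cancel (Int.even_mul_succ_self j).two_dvd
    rw [zero_zpow _ fun h => ?_, mul_zero]
    rw [h, zero_mul, eq_comm, mul_eq_zero] at h₂
    omega

variable [CompleteSpace K]

lemma multipliable_one_add_mul_pow (a : K) (hq : ‖q‖ < 1) :
    Multipliable fun m : ℕ => 1 + a * q ^ m :=
  multipliable_one_add_of_summable <| by
    simpa only [norm_mul, norm_pow] using
      (summable_geometric_of_lt_one (norm_nonneg q) hq).mul_left ‖a‖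

lemma multipliable_jacobi_factor (hq : ‖q‖ < 1) (z : K) :
    Multipliable fun m : ℕ => (1 + z * q ^ (m + 1)) * (1 + z⁻¹ * q ^ m) * (1 - q ^ (m + 1)) := by
  have h := ((multipliable_one_add_mul_pow (z * q) hq).mul
    (multipliable_one_add_mul_pow z⁻¹ hq)).mul (multipliable_one_add_mul_pow (-q) hq)
  exact h.congr fun m => by ring

lemma tendsto_qPoch (hq : ‖q‖ < 1) :
    Tendsto (qPoch q) atTop (𝓝 (∏' m : ℕ, (1 - q ^ (m + 1)))) := by
  have h : (fun m : ℕ => 1 - q ^ (m + 1)) = fun m => 1 + -q * q ^ m := funext fun m => by ring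
  rw [h]
  exact (multipliable_one_add_mul_pow (-q) hq).hasProd.tendsto_prod_nat.congr fun n => by
    simp only [qPoch, h]

lemma tprod_one_sub_pow_succ_ne_zero (hq : ‖q‖ < 1) : ∏' m : ℕ, (1 - q ^ (m + 1)) ≠ 0 := by
  simp only [sub_eq_add_neg]
  refine tprod_one_add_ne_zero_of_summable (fun m h => ?_) ?_
  · have := norm_pow_succ_lt_one hq m
    rw [← add_neg_eq_zero.mp h, norm_one] at this
    exact this.false
  · simpa only [norm_neg, norm_pow, pow_succ', norm_mul] using
      (summable_geometric_of_lt_one (norm_nonneg q) hq).mul_left ‖q‖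

lemma exists_bound_norm_qPoch (hq : ‖q‖ < 1) :
    ∃ C, ∀ n, ‖qPoch q n‖ ≤ C ∧ ‖(qPoch q n)⁻¹‖ ≤ C := by
  have hlim := tendsto_qPoch hq
  obtain ⟨C₁, hC₁⟩ := isBounded_iff_forall_norm_le.mp (Metric.isBounded_range_of_tendsto _ hlim)
  obtain ⟨C₂, hC₂⟩ := isBounded_iff_forall_norm_le.mp
    (Metric.isBounded_range_of_tendsto _ (hlim.inv₀ (tprod_one_sub_pow_succ_ne_zero hq)))
  exact ⟨max C₁ C₂, fun n => ⟨(hC₁ _ ⟨n, rfl⟩).trans (le_max_left _ _),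
    (hC₂ _ ⟨n, rfl⟩).trans (le_max_right _ _)⟩⟩

lemma tendsto_jacobiCoeff (hq : ‖q‖ < 1) (j : ℤ) :
    Tendsto (jacobiCoeff q · j) atTop (𝓝 1) := by
  have hD := tprod_one_sub_pow_succ_ne_zero hq
  have hlim : ∀ u : ℕ → ℕ, (∀ n, n ≤ u n + j.natAbs) →
      Tendsto (fun n => qPoch q (u n)) atTop (𝓝 (∏' m : ℕ, (1 - q ^ (m + 1)))) := fun u hu =>
    (tendsto_qPoch hq).comp <| tendsto_atTop_atTop.mpr fun b =>
      ⟨b + j.natAbs, fun n hn => by have := hu n; omega⟩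
  have hlim₁ := ((hlim (2 * ·) fun n => by omega).mul (hlim id fun n => by simp)).mul
    (((hlim (fun n => (j + n).toNat) fun n => by omega).inv₀ hD).mul
      ((hlim (fun n => (n - j).toNat) fun n => by omega).inv₀ hD))
  rw [mul_mul_mul_comm, mul_inv_cancel₀ hD, mul_one] at hlim₁
  refine hlim₁.congr' ?_
  filter_upwards [eventually_ge_atTop j.natAbs] with n hn
  rw [jacobiCoeff_eq_of_natAbs_le hq hn]
  rfl

lemma exists_norm_jacobiCoeff_le (hq : ‖q‖ < 1) :
    ∃ C, ∀ n j, ‖jacobiCoeff q n j‖ ≤ C := by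
  obtain ⟨C, hC⟩ := exists_bound_norm_qPoch hq
  have hC₀ : 0 ≤ C := (norm_nonneg _).trans (hC 0).1
  refine ⟨C * C * (C * C), fun n j => ?_⟩
  by_cases hj : j.natAbs ≤ n
  · rw [jacobiCoeff_eq_of_natAbs_le hq hj, norm_mul, norm_mul, norm_mul]
    gcongr
    exacts [(hC _).1, (hC _).1, (hC _).2, (hC _).2]
  · have : jacobiCoeff q n j = 0 := by
      by_cases hneg : -(n : ℤ) ≤ j
      · rw [jacobiCoeff, if_pos hneg, qBinom_eq_zero_of_lt q (by omega), zero_mul]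
      · rw [jacobiCoeff, if_neg hneg]
    rw [this, norm_zero]
    positivity

theorem jacobi_triple_product {z : K} (hq : ‖q‖ < 1) (hz : z ≠ 0) :
    ∏' m : ℕ, ((1 + z * q ^ (m + 1)) * (1 + z⁻¹ * q ^ m) * (1 - q ^ (m + 1)))
      = ∑' j : ℤ, z ^ j * q ^ (j * (j + 1) / 2) := by
  rcases eq_or_ne q 0 with rfl | hq₀
  · exact jacobi_triple_product_zero z
  obtain ⟨C, hC⟩ := exists_norm_jacobiCoeff_le hq
  have hpartial : ∀ n,
      ∏ m ∈ range n, ((1 + z * q ^ (m + 1)) * (1 + z⁻¹ * q ^ m) * (1 - q ^ (m + 1)))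
        = ∑' j, jacobiCoeff q n j * (z ^ j * q ^ (j * (j + 1) / 2)) := fun n => by
    rw [tsum_jacobiCoeff_mul, ← prod_range_jacobi_eq_sum_qBinom hq₀ hz, qPoch, ← prod_mul_distrib]
    exact prod_congr rfl fun m _ => by ring
  refine tendsto_nhds_unique ?_ (tendsto_tsum_mul_of_tendsto_one
    (summable_norm_zpow_mul_zpow hq z) (tendsto_jacobiCoeff hq) hC)
  simpa only [hpartial] using (multipliable_jacobi_factor hq z).hasProd.tendsto_prod_nat

end Analysis

/-- The Jacobi triple product identity: for `|q| < 1` and `z ≠ 0`,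
`∏_{n=1}^∞ (1 + z q^n)(1 + z⁻¹ q^{n-1})(1 - q^n) = ∑_{j ∈ ℤ} z^j q^{binom(j+1,2)}`,
where `binom(j+1,2) = j(j+1)/2`. -/
theorem stmt_5 (q z : ℂ) (hq : ‖q‖ < 1) (hz : z ≠ 0) :
    ∏' m : ℕ, ((1 + z * q ^ (m + 1)) * (1 + z⁻¹ * q ^ m) * (1 - q ^ (m + 1)))
      = ∑' j : ℤ, z ^ j * q ^ (j * (j + 1) / 2) :=
  jacobi_triple_product hq hz
end

section
/- Let H₁, H₂ be sets of finite sequences of nonnegative integers and let P_{H₁,H₂}(k) denote the number of generalized Frobenius partitions of k with top row in H₁ and bottom row in H₂. Then ∑_{k≥0} P_{H₁,H₂}(k) q^k = [z⁰] (∑_{k,d} P_{H₁}(k,d) q^k (zq)^d)(∑_{k,d} P_{H₂}(k,d) q^k z^{-d}), where [z⁰] extracts the coefficient of z⁰. -/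
/-- `P_H(k, d)`: the number of sequences in `H` of length `d` summing to `k`. -/
noncomputable def PH (H : Set (List ℕ)) (k d : ℕ) : ℕ :=
  Nat.card {l : List ℕ // l ∈ H ∧ l.length = d ∧ l.sum = k}

/-- `P_{H₁,H₂}(k)`: the number of generalized Frobenius partitions of `k`
with top row in `H₁` and bottom row in `H₂`; a generalized Frobenius partition
of `k` is a pair of rows of equal length `d` with `k = d + ∑ fᵢ + ∑ gᵢ`. -/
noncomputable def PHH (H₁ H₂ : Set (List ℕ)) (k : ℕ) : ℕ :=
  Nat.card {pr : List ℕ × List ℕ //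
    pr.1 ∈ H₁ ∧ pr.2 ∈ H₂ ∧ pr.1.length = pr.2.length ∧
    pr.1.length + pr.1.sum + pr.2.sum = k}

/-!
Sort the partitions of `k` by their shape `(d, a, b)`: the common length of the rows and the
two row sums, so that `d + a + b = k`. The partitions of a given shape are exactly the pairs of
a row of `H₁` of length `d` and sum `a` with a row of `H₂` of length `d` and sum `b`.
-/

open Finset.Nat

theorem List.setOf_length_eq_sum_eq_finite (d k : ℕ) :
    {l : List ℕ | l.length = d ∧ l.sum = k}.Finite := by
  refine ((antidiagonalTuple d k).finite_toSet.image List.ofFn).subset ?_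
  rintro l ⟨rfl, rfl⟩
  refine ⟨l.get, ?_, List.ofFn_get l⟩
  rw [Finset.mem_coe, mem_antidiagonalTuple, ← List.sum_ofFn, List.ofFn_get]

abbrev Rows (H : Set (List ℕ)) (k d : ℕ) : Type :=
  {l : List ℕ // l ∈ H ∧ l.length = d ∧ l.sum = k}

instance (H : Set (List ℕ)) (k d : ℕ) : Finite (Rows H k d) :=
  ((List.setOf_length_eq_sum_eq_finite d k).subset fun _ hl => hl.2).to_subtype

abbrev FrobeniusPartition (H₁ H₂ : Set (List ℕ)) (k : ℕ) : Type :=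
  {pr : List ℕ × List ℕ //
    pr.1 ∈ H₁ ∧ pr.2 ∈ H₂ ∧ pr.1.length = pr.2.length ∧ pr.1.length + pr.1.sum + pr.2.sum = k}

/-- The index `t` records the shape `(d, a, b) = (t 0, t 1, t 2)` of a partition. -/
def frobeniusPartitionEquivSigma (H₁ H₂ : Set (List ℕ)) (k : ℕ) :
    FrobeniusPartition H₁ H₂ k ≃
      Σ t : antidiagonalTuple 3 k, Rows H₁ (t.1 1) (t.1 0) × Rows H₂ (t.1 2) (t.1 0) where
  toFun p :=
    ⟨⟨![p.1.1.length, p.1.1.sum, p.1.2.sum], by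
        simpa [mem_antidiagonalTuple, Fin.sum_univ_three] using p.2.2.2.2⟩,
      ⟨p.1.1, p.2.1, rfl, rfl⟩, ⟨p.1.2, p.2.2.1, p.2.2.2.1.symm, rfl⟩⟩
  invFun x := by
    obtain ⟨⟨t, ht⟩, ⟨l₁, h₁, hd₁, ha⟩, ⟨l₂, h₂, hd₂, hb⟩⟩ := x
    refine ⟨(l₁, l₂), h₁, h₂, hd₁.trans hd₂.symm, ?_⟩
    rw [mem_antidiagonalTuple, Fin.sum_univ_three] at ht
    simpa only [hd₁, ha, hb] using ht
  left_inv _ := rfl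
  right_inv := by
    rintro ⟨⟨t, ht⟩, ⟨l₁, h₁, hd₁, ha⟩, ⟨l₂, h₂, hd₂, hb⟩⟩
    obtain rfl : t = ![l₁.length, l₁.sum, l₂.sum] := by
      ext i; fin_cases i <;> simp [hd₁, ha, hb]
    rfl

/-- Andrews' product formula for generalized Frobenius partitions:
`∑_k P_{H₁,H₂}(k) q^k = [z⁰] (∑_{k,d} P_{H₁}(k,d) q^k (zq)^d)(∑_{k,d} P_{H₂}(k,d) q^k z^{-d})`.
Extracting the coefficient of `z⁰ q^k` in the product on the right pairs equal
values of `d` and splits `k = d + a + b`, so the identity reads, coefficient-wise: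
`P_{H₁,H₂}(k) = ∑_{d+a+b=k} P_{H₁}(a,d) · P_{H₂}(b,d)`. -/
theorem stmt_8 (H₁ H₂ : Set (List ℕ)) (k : ℕ) :
    PHH H₁ H₂ k
      = ∑ t ∈ Finset.Nat.antidiagonalTuple 3 k, PH H₁ (t 1) (t 0) * PH H₂ (t 2) (t 0) := by
  rw [PHH, Nat.card_congr (frobeniusPartitionEquivSigma H₁ H₂ k), Nat.card_sigma]
  simp only [Nat.card_prod]
  exact Finset.sum_coe_sort _ fun t : Fin 3 → ℕ => PH H₁ (t 1) (t 0) * PH H₂ (t 2) (t 0)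
end

section
/- Let C be the Cartan matrix of type D_n (n ≥ 4) and Q(m) = mᵀCm the associated quadratic form. Under the explicit change of coordinates (z_1,...,z_n) ↦ (m_1,...,m_n) given by m_1 = -b_{1..n-2} - c_{1..n-2}(z_{n-1}+z_n), m_i = -2a_{1..i-1} + c_{1..i-1}b_{i..n-2} - c_{1..n-2}(z_{n-1}+z_n) for 2 ≤ i ≤ n-2, m_{n-1} = -a_{1..n-2} - c_{1..n-2}z_{n-1}, m_n = -a_{1..n-2} - c_{1..n-2}z_n (where for I ⊆ {1,...,n-2}, z_I = ∑_{i∈I} z_i = 2a_I - b_I with b_I ∈ {0,1}, c_I = 2b_I - 1), this map ℤ^n → ℤ^n is a bijection. -/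
/-- `b(z) ∈ {0,1}`: the parity of `z`, so that `z = 2a(z) - b(z)`. -/
def intb (z : ℤ) : ℤ := if Odd z then 1 else 0

/-- `a(z) = (z + b(z))/2`, so that `z = 2a(z) - b(z)` with `b(z) ∈ {0,1}`. -/
def inta (z : ℤ) : ℤ := (z + intb z) / 2

/-- `c(z) = 2b(z) - 1 ∈ {-1, 1}`. -/
def intc (z : ℤ) : ℤ := 2 * intb z - 1

/-- The partial sum `z_{i..j} = ∑_{i ≤ t ≤ j} z_t` (1-based indices). -/
def psum (n : ℕ) (z : Fin n → ℤ) (i j : ℕ) : ℤ :=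
  ∑ t ∈ Finset.univ.filter (fun t : Fin n => i ≤ (t : ℕ) + 1 ∧ (t : ℕ) + 1 ≤ j), z t

/-- The type `D_n` change of coordinates `(z_1,…,z_n) ↦ (m_1,…,m_n)`:
`m_1 = -b_{1..n-2} - c_{1..n-2}(z_{n-1}+z_n)`,
`m_i = -2a_{1..i-1} + c_{1..i-1} b_{i..n-2} - c_{1..n-2}(z_{n-1}+z_n)` for `2 ≤ i ≤ n-2`,
`m_{n-1} = -a_{1..n-2} - c_{1..n-2} z_{n-1}`, `m_n = -a_{1..n-2} - c_{1..n-2} z_n`,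
where `z_I = 2a_I - b_I` with `b_I ∈ {0,1}` and `c_I = 2b_I - 1`.
(0-based index `k` corresponds to `m_{k+1}`.) -/
def Dmap (n : ℕ) (z : Fin n → ℤ) : Fin n → ℤ := fun k =>
  if (k : ℕ) = 0 then
    -intb (psum n z 1 (n - 2)) -
      intc (psum n z 1 (n - 2)) * (psum n z (n - 1) (n - 1) + psum n z n n)
  else if (k : ℕ) ≤ n - 3 then
    -2 * inta (psum n z 1 (k : ℕ)) +
      intc (psum n z 1 (k : ℕ)) * intb (psum n z ((k : ℕ) + 1) (n - 2)) -
      intc (psum n z 1 (n - 2)) * (psum n z (n - 1) (n - 1) + psum n z n n)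
  else if (k : ℕ) = n - 2 then
    -inta (psum n z 1 (n - 2)) - intc (psum n z 1 (n - 2)) * psum n z (n - 1) (n - 1)
  else
    -inta (psum n z 1 (n - 2)) - intc (psum n z 1 (n - 2)) * psum n z n n

/-! Write `S_j = z_{1..j}` and `S = S_{n-2}`. The identity `2a_x - c_x b_{y-x} = x + b_y` turns the
middle coordinates into `m_{j+1} = m_1 - S_j`, and `m_1 - m_{n-1} - m_n = 2a_S - b_S = S`. Since
`c_S² = 1`, the last two coordinates give back `z_{n-1} = -c_S (m_{n-1} + a_S)` and
`z_n = -c_S (m_n + a_S)`. So `m` determines all partial sums, hence `z`, through an explicit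
two-sided inverse. -/

lemma intb_eq_emod (x : ℤ) : intb x = x % 2 := by
  rcases Int.emod_two_eq x with h | h <;> simp [intb, Int.odd_iff, h]

lemma two_mul_inta (x : ℤ) : 2 * inta x = x + intb x := by
  rw [inta, intb_eq_emod]; omega

lemma intc_mul_self (x : ℤ) : intc x * intc x = 1 := by
  rcases Int.emod_two_eq x with h | h <;> simp [intc, intb_eq_emod, h]

lemma two_mul_inta_sub_intc_mul_intb_sub (x y : ℤ) :
    2 * inta x - intc x * intb (y - x) = x + intb y := by
  rw [two_mul_inta, intc, intb_eq_emod, intb_eq_emod, intb_eq_emod]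
  rcases Int.emod_two_eq x with h | h <;> rw [h] <;> omega

section PartialSums

variable {n : ℕ} (z : Fin n → ℤ)

lemma psum_one_zero : psum n z 1 0 = 0 := by simp [psum]

lemma psum_add_psum {i j : ℕ} (hij : i ≤ j) :
    psum n z 1 i + psum n z (i + 1) j = psum n z 1 j := by
  simp only [psum, Finset.sum_filter, ← Finset.sum_add_distrib]
  refine Finset.sum_congr rfl fun t _ => ?_
  split_ifs <;> omega

lemma psum_self (k : Fin n) {j : ℕ} (hj : (k : ℕ) + 1 = j) : psum n z j j = z k := by
  subst hj
  simp [psum, ← le_antisymm_iff, Finset.sum_filter]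

lemma psum_one_succ (k : Fin n) : psum n z 1 (k + 1) = psum n z 1 k + z k := by
  rw [← psum_add_psum z k.val.le_succ, psum_self z k rfl]

end PartialSums

section Dmap

variable {n : ℕ} (z : Fin n → ℤ)

lemma Dmap_apply_of_le (k : Fin n) (hk : (k : ℕ) ≤ n - 3) :
    Dmap n z k = -psum n z 1 k - intb (psum n z 1 (n - 2)) -
      intc (psum n z 1 (n - 2)) * (psum n z (n - 1) (n - 1) + psum n z n n) := by
  unfold Dmap
  split_ifs with h0
  · rw [h0, psum_one_zero]
    ring
  · have hsplit := psum_add_psum z (show (k : ℕ) ≤ n - 2 by omega)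
    rw [eq_sub_of_add_eq' hsplit]
    linear_combination -two_mul_inta_sub_intc_mul_intb_sub (psum n z 1 k) (psum n z 1 (n - 2))

lemma Dmap_apply_of_lt (k : Fin n) (hk : n - 3 < k) :
    Dmap n z k = -inta (psum n z 1 (n - 2)) - intc (psum n z 1 (n - 2)) * z k := by
  unfold Dmap
  split_ifs
  · omega
  · omega
  all_goals rw [psum_self z k (by omega)]

end Dmap

section Inverse

variable {n : ℕ}

def extendZero (m : Fin n → ℤ) (j : ℕ) : ℤ := if h : j < n then m ⟨j, h⟩ else 0

lemma extendZero_of_lt (m : Fin n → ℤ) {j : ℕ} (h : j < n) : extendZero m j = m ⟨j, h⟩ :=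
  dif_pos h

/-- `z_{1..n-2}`, recovered from `m` as `m_1 - m_{n-1} - m_n`. -/
def DinvSum (m : Fin n → ℤ) : ℤ := extendZero m 0 - extendZero m (n - 2) - extendZero m (n - 1)

/-- `z_{1..j}` for `j ≤ n - 2`, recovered from `m` as `m_1 - m_{j+1}`. -/
def DinvPrefix (m : Fin n → ℤ) (j : ℕ) : ℤ :=
  if j ≤ n - 3 then extendZero m 0 - extendZero m j else DinvSum m

def Dinv (m : Fin n → ℤ) : Fin n → ℤ := fun k =>
  if (k : ℕ) ≤ n - 3 then DinvPrefix m (k + 1) - DinvPrefix m k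
  else -intc (DinvSum m) * (m k + inta (DinvSum m))

lemma DinvSum_Dmap (hn : 3 ≤ n) (z : Fin n → ℤ) : DinvSum (Dmap n z) = psum n z 1 (n - 2) := by
  have hW := psum_self z ⟨n - 2, by omega⟩ (j := n - 1) (by dsimp only; omega)
  have hV := psum_self z ⟨n - 1, by omega⟩ (j := n) (by dsimp only; omega)
  rw [DinvSum, extendZero_of_lt _ (by omega), extendZero_of_lt _ (by omega),
    extendZero_of_lt _ (by omega), Dmap_apply_of_le z _ (Nat.zero_le _),
    Dmap_apply_of_lt z _ (by dsimp only; omega), Dmap_apply_of_lt z _ (by dsimp only; omega),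
    hW, hV, psum_one_zero]
  linear_combination two_mul_inta (psum n z 1 (n - 2))

lemma DinvPrefix_Dmap (hn : 3 ≤ n) (z : Fin n → ℤ) {j : ℕ} (hj : j ≤ n - 2) :
    DinvPrefix (Dmap n z) j = psum n z 1 j := by
  rw [DinvPrefix]
  split_ifs with h
  · rw [extendZero_of_lt _ (by omega), extendZero_of_lt _ (by omega),
      Dmap_apply_of_le z _ (Nat.zero_le _), Dmap_apply_of_le z _ h]
    simp only [psum_one_zero]
    ring
  · rw [DinvSum_Dmap hn, show j = n - 2 by omega]

lemma Dinv_Dmap (hn : 3 ≤ n) (z : Fin n → ℤ) : Dinv (Dmap n z) = z := by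
  funext k
  rw [Dinv]
  split_ifs with hk
  · rw [DinvPrefix_Dmap hn z (by omega), DinvPrefix_Dmap hn z (by omega), psum_one_succ]
    ring
  · rw [DinvSum_Dmap hn, Dmap_apply_of_lt z k (by omega)]
    linear_combination z k * intc_mul_self (psum n z 1 (n - 2))

lemma psum_Dinv (m : Fin n → ℤ) {j : ℕ} (hj : j ≤ n - 2) :
    psum n (Dinv m) 1 j = DinvPrefix m j := by
  induction j with
  | zero => simp [psum_one_zero, DinvPrefix]
  | succ j ih =>
    rw [psum_one_succ (Dinv m) ⟨j, by omega⟩, ih (by omega), Dinv, if_pos (by dsimp only; omega)]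
    ring

lemma Dmap_Dinv (hn : 3 ≤ n) (m : Fin n → ℤ) : Dmap n (Dinv m) = m := by
  funext k
  set σ := DinvSum m
  have hσ : σ = extendZero m 0 - extendZero m (n - 2) - extendZero m (n - 1) := rfl
  have hS : psum n (Dinv m) 1 (n - 2) = σ := by
    rw [psum_Dinv m le_rfl, DinvPrefix, if_neg (by omega)]
  have hW : psum n (Dinv m) (n - 1) (n - 1) = -intc σ * (extendZero m (n - 2) + inta σ) := by
    rw [psum_self _ ⟨n - 2, by omega⟩ (by dsimp only; omega), Dinv, if_neg (by dsimp only; omega),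
      extendZero_of_lt m (by omega)]
  have hV : psum n (Dinv m) n n = -intc σ * (extendZero m (n - 1) + inta σ) := by
    rw [psum_self _ ⟨n - 1, by omega⟩ (by dsimp only; omega), Dinv, if_neg (by dsimp only; omega),
      extendZero_of_lt m (by omega)]
  by_cases hk : (k : ℕ) ≤ n - 3
  · rw [Dmap_apply_of_le _ k hk, hS, hW, hV, psum_Dinv m (by omega), DinvPrefix, if_pos hk,
      ← extendZero_of_lt m k.isLt]
    linear_combination (extendZero m (n - 2) + extendZero m (n - 1) + 2 * inta σ) *
      intc_mul_self σ + two_mul_inta σ + hσ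
  · rw [Dmap_apply_of_lt _ k (by omega), hS, Dinv, if_neg hk]
    linear_combination (m k + inta σ) * intc_mul_self σ

end Inverse

/-- The explicit type `D_n` change of coordinates `ℤ^n → ℤ^n`, `z ↦ m`, is a bijection. -/
theorem stmt_15 (n : ℕ) (hn : 4 ≤ n) : Function.Bijective (Dmap n) :=
  Function.bijective_iff_has_inverse.mpr
    ⟨Dinv, Dinv_Dmap (by omega), Dmap_Dinv (by omega)⟩
end
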